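/- Forward diamond: if X →[θ₁] X₁ →[θ₂] Y is a forward trace in the proved LTS for CCSK with θ₁ ⌣ θ₂, then there exists a process X₂ such that X →[θ₂] X₂ →[θ₁] Y. -/

import Mathlib

namespace CCSK

/-- Labels: names, co-names, and the silent action τ. -/
inductive Lab : Type
  | name : ℕ → Lab
  | coname : ℕ → Lab
  | tau : Lab
deriving DecidableEq

/-- Complement of a label. -/
def Lab.co : Lab → Lab
  | .name n => .coname n
  | .coname n => .name n
  | .tau => .tau

abbrev Key := ℕ

/-- CCSK processes (with a replication operator for the extended calculus). -/
inductive Proc : Type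
  | nil : Proc
  | pre : Lab → Proc → Proc          -- α.X
  | kpre : Lab → Key → Proc → Proc   -- α[k].X
  | par : Proc → Proc → Proc
  | sum : Proc → Proc → Proc
  | res : Proc → ℕ → Proc            -- X \ a
  | repl : Proc → Proc               -- !X
deriving DecidableEq

/-- Keys occurring in a process. -/
def Proc.keys : Proc → Set Key
  | .nil => ∅
  | .pre _ X => X.keys
  | .kpre _ k X => insert k X.keys
  | .par X Y => X.keys ∪ Y.keys
  | .sum X Y => X.keys ∪ Y.keys
  | .res X _ => X.keys
  | .repl X => X.keys

/-- A process is standard when it contains no keys. -/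
def Proc.std (X : Proc) : Prop := X.keys = ∅

/-- Multiset of keyed-prefix occurrences (label, key). -/
def Proc.keyed : Proc → Multiset (Lab × Key)
  | .nil => 0
  | .pre _ X => X.keyed
  | .kpre a k X => (a, k) ::ₘ X.keyed
  | .par X Y => X.keyed + Y.keyed
  | .sum X Y => X.keyed + Y.keyed
  | .res X _ => X.keyed
  | .repl X => X.keyed

/-- Enhanced keyed labels. -/
inductive ELab : Type
  | base : Lab → Key → ELab          -- α[k]
  | parL : ELab → ELab               -- |_L θ
  | parR : ELab → ELab               -- |_R θ
  | bang : ELab → ELab               -- !θ (replication)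
  | syn : ELab → ELab → ELab         -- ⟨θ_L, θ_R⟩
deriving DecidableEq

/-- Underlying action label ℓ(θ). -/
def ELab.act : ELab → Lab
  | .base a _ => a
  | .parL θ => θ.act
  | .parR θ => θ.act
  | .bang θ => θ.act
  | .syn _ _ => .tau

/-- Key of an enhanced keyed label. -/
def ELab.key : ELab → Key
  | .base _ k => k
  | .parL θ => θ.key
  | .parR θ => θ.key
  | .bang θ => θ.key
  | .syn θ _ => θ.key

/-- Dependency relation ⋖ on enhanced keyed labels (including the extension
for replication labels). -/
inductive Dep : ELab → ELab → Prop
  | base (a : Lab) (k : Key) (θ : ELab) : Dep (.base a k) θ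
  | parL {θ θ'} : Dep θ θ' → Dep (.parL θ) (.parL θ')
  | parR {θ θ'} : Dep θ θ' → Dep (.parR θ) (.parR θ')
  | synSrcL {θL θR θ} : Dep θL θ → Dep (.syn θL θR) θ
  | synSrcR {θL θR θ} : Dep θR θ → Dep (.syn θL θR) θ
  | synTgtL {θ θL θR} : Dep θ θL → Dep θ (.syn θL θR)
  | synTgtR {θ θL θR} : Dep θ θR → Dep θ (.syn θL θR)
  | synSynL {θL θR θL' θR'} : Dep θL θL' → Dep (.syn θL θR) (.syn θL' θR')
  | synSynR {θL θR θL' θR'} : Dep θR θR' → Dep (.syn θL θR) (.syn θL' θR')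
  | bangBang (θ : ELab) : Dep (.bang θ) (.bang θ)
  | bangParL (θ θ' : ELab) : Dep (.bang θ) (.parL θ')
  | bangParRSynL (θL θR θ'' : ELab) : Dep (.bang (.syn θL θR)) (.parR (.parL θ''))
  | bangParRSynR (θL θR θ'' : ELab) : Dep (.bang (.syn θL θR)) (.parR (.parR θ''))
  | bangParR {θ θ' : ELab} : Dep θ θ' → Dep (.bang θ) (.parR θ')

/-- Concurrency of labels: no dependency in either direction. -/
def Conc (θ₁ θ₂ : ELab) : Prop := ¬ Dep θ₁ θ₂ ∧ ¬ Dep θ₂ θ₁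

/-- The proved forward LTS for CCSK (without replication rules). -/
inductive Fwd : Proc → ELab → Proc → Prop
  | act {a k X} : Proc.std X → Fwd (.pre a X) (.base a k) (.kpre a k X)
  | pre {a : Lab} {k : Key} {X X' : Proc} {θ : ELab} : Fwd X θ X' → θ.key ≠ k →
      Fwd (.kpre a k X) θ (.kpre a k X')
  | res {X X' : Proc} {θ : ELab} {a : ℕ} : Fwd X θ X' → θ.act ≠ .name a → θ.act ≠ .coname a →
      Fwd (X.res a) θ (X'.res a)
  | parL {X X' Y : Proc} {θ : ELab} : Fwd X θ X' → θ.key ∉ Y.keys →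
      Fwd (X.par Y) (.parL θ) (X'.par Y)
  | parR {Y Y' X : Proc} {θ : ELab} : Fwd Y θ Y' → θ.key ∉ X.keys →
      Fwd (X.par Y) (.parR θ) (X.par Y')
  | syn {X X' Y Y' : Proc} {θ₁ θ₂ : ELab} : Fwd X θ₁ X' → Fwd Y θ₂ Y' →
      θ₁.act ≠ .tau → θ₂.act = θ₁.act.co → θ₂.key = θ₁.key →
      Fwd (X.par Y) (.syn (.parL θ₁) (.parR θ₂)) (X'.par Y')
  | sumL {X θ X' Y} : Fwd X θ X' → Proc.std Y → Fwd (X.sum Y) θ (X'.sum Y)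
  | sumR {Y θ Y' X} : Fwd Y θ Y' → Proc.std X → Fwd (X.sum Y) θ (X.sum Y')

/-- The proved backward LTS for CCSK (exact symmetric of the forward one).
`Bwd X θ Y` means `X ⇝[θ] Y`. -/
inductive Bwd : Proc → ELab → Proc → Prop
  | act {a k X} : Proc.std X → Bwd (.kpre a k X) (.base a k) (.pre a X)
  | pre {a : Lab} {k : Key} {X' X : Proc} {θ : ELab} : Bwd X' θ X → θ.key ≠ k →
      Bwd (.kpre a k X') θ (.kpre a k X)
  | res {X' X : Proc} {θ : ELab} {a : ℕ} : Bwd X' θ X → θ.act ≠ .name a → θ.act ≠ .coname a →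
      Bwd (X'.res a) θ (X.res a)
  | parL {X' X Y : Proc} {θ : ELab} : Bwd X' θ X → θ.key ∉ Y.keys →
      Bwd (X'.par Y) (.parL θ) (X.par Y)
  | parR {Y' Y X : Proc} {θ : ELab} : Bwd Y' θ Y → θ.key ∉ X.keys →
      Bwd (X.par Y') (.parR θ) (X.par Y)
  | syn {X' X Y' Y : Proc} {θ₁ θ₂ : ELab} : Bwd X' θ₁ X → Bwd Y' θ₂ Y →
      θ₁.act ≠ .tau → θ₂.act = θ₁.act.co → θ₂.key = θ₁.key →
      Bwd (X'.par Y') (.syn (.parL θ₁) (.parR θ₂)) (X.par Y)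
  | sumL {X' θ X Y} : Bwd X' θ X → Proc.std Y → Bwd (X'.sum Y) θ (X.sum Y)
  | sumR {Y' θ Y X} : Bwd Y' θ Y → Proc.std X → Bwd (X.sum Y') θ (X.sum Y)

/-- Combined LTS: `Step true` is forward, `Step false` is backward. -/
def Step : Bool → Proc → ELab → Proc → Prop
  | true => Fwd
  | false => Bwd

/-- Reachability: connected to a standard process by forward/backward moves. -/
def Reachable (X : Proc) : Prop :=
  ∃ X₀ : Proc, X₀.std ∧
    Relation.ReflTransGen (fun A B => ∃ d θ, Step d A θ B) X₀ X

/-- The proved forward LTS for CCSK extended with replication. -/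
inductive FwdR : Proc → ELab → Proc → Prop
  | act {a k X} : Proc.std X → FwdR (.pre a X) (.base a k) (.kpre a k X)
  | pre {a : Lab} {k : Key} {X X' : Proc} {θ : ELab} : FwdR X θ X' → θ.key ≠ k →
      FwdR (.kpre a k X) θ (.kpre a k X')
  | res {X X' : Proc} {θ : ELab} {a : ℕ} : FwdR X θ X' → θ.act ≠ .name a → θ.act ≠ .coname a →
      FwdR (X.res a) θ (X'.res a)
  | parL {X X' Y : Proc} {θ : ELab} : FwdR X θ X' → θ.key ∉ Y.keys →
      FwdR (X.par Y) (.parL θ) (X'.par Y)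
  | parR {Y Y' X : Proc} {θ : ELab} : FwdR Y θ Y' → θ.key ∉ X.keys →
      FwdR (X.par Y) (.parR θ) (X.par Y')
  | syn {X X' Y Y' : Proc} {θ₁ θ₂ : ELab} : FwdR X θ₁ X' → FwdR Y θ₂ Y' →
      θ₁.act ≠ .tau → θ₂.act = θ₁.act.co → θ₂.key = θ₁.key →
      FwdR (X.par Y) (.syn (.parL θ₁) (.parR θ₂)) (X'.par Y')
  | sumL {X θ X' Y} : FwdR X θ X' → Proc.std Y → FwdR (X.sum Y) θ (X'.sum Y)
  | sumR {Y θ Y' X} : FwdR Y θ Y' → Proc.std X → FwdR (X.sum Y) θ (X.sum Y')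
  | repl1 {X X' : Proc} {θ : ELab} : FwdR X θ X' →
      FwdR (.repl X) (.bang θ) ((Proc.repl X).par X')
  | repl2 {X X' X'' : Proc} {θ₁ θ₂ : ELab} : FwdR X θ₁ X' → FwdR X θ₂ X'' →
      θ₁.act ≠ .tau → θ₂.act = θ₁.act.co → θ₂.key = θ₁.key →
      FwdR (.repl X) (.bang (.syn (.parL θ₁) (.parR θ₂)))
        ((Proc.repl X).par (X'.par X''))

/-- The proved backward LTS for CCSK extended with replication. -/
inductive BwdR : Proc → ELab → Proc → Prop
  | act {a k X} : Proc.std X → BwdR (.kpre a k X) (.base a k) (.pre a X)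
  | pre {a : Lab} {k : Key} {X' X : Proc} {θ : ELab} : BwdR X' θ X → θ.key ≠ k →
      BwdR (.kpre a k X') θ (.kpre a k X)
  | res {X' X : Proc} {θ : ELab} {a : ℕ} : BwdR X' θ X → θ.act ≠ .name a → θ.act ≠ .coname a →
      BwdR (X'.res a) θ (X.res a)
  | parL {X' X Y : Proc} {θ : ELab} : BwdR X' θ X → θ.key ∉ Y.keys →
      BwdR (X'.par Y) (.parL θ) (X.par Y)
  | parR {Y' Y X : Proc} {θ : ELab} : BwdR Y' θ Y → θ.key ∉ X.keys →
      BwdR (X.par Y') (.parR θ) (X.par Y)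
  | syn {X' X Y' Y : Proc} {θ₁ θ₂ : ELab} : BwdR X' θ₁ X → BwdR Y' θ₂ Y →
      θ₁.act ≠ .tau → θ₂.act = θ₁.act.co → θ₂.key = θ₁.key →
      BwdR (X'.par Y') (.syn (.parL θ₁) (.parR θ₂)) (X.par Y)
  | sumL {X' θ X Y} : BwdR X' θ X → Proc.std Y → BwdR (X'.sum Y) θ (X.sum Y)
  | sumR {Y' θ Y X} : BwdR Y' θ Y → Proc.std X → BwdR (X.sum Y') θ (X.sum Y)
  | repl1 {X' X : Proc} {θ : ELab} : BwdR X' θ X →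
      BwdR ((Proc.repl X).par X') (.bang θ) (.repl X)
  | repl2 {X' X'' X : Proc} {θ₁ θ₂ : ELab} : BwdR X' θ₁ X → BwdR X'' θ₂ X →
      θ₁.act ≠ .tau → θ₂.act = θ₁.act.co → θ₂.key = θ₁.key →
      BwdR ((Proc.repl X).par (X'.par X''))
        (.bang (.syn (.parL θ₁) (.parR θ₂))) (.repl X)

/-- Combined extended LTS. -/
def StepR : Bool → Proc → ELab → Proc → Prop
  | true => FwdR
  | false => BwdR

/-- Reachability in the extended calculus. -/
def ReachableR (X : Proc) : Prop :=
  ∃ X₀ : Proc, X₀.std ∧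
    Relation.ReflTransGen (fun A B => ∃ d θ, StepR d A θ B) X₀ X

/-- Traces: sequences of composable (forward or backward) transitions. -/
inductive Trace : Proc → Proc → Type
  | nil (X : Proc) : Trace X X
  | cons {X Y Z : Proc} (d : Bool) (θ : ELab) (s : Step d X θ Y)
      (T : Trace Y Z) : Trace X Z

/-- Composition of traces. -/
def Trace.comp : {X Y Z : Proc} → Trace X Y → Trace Y Z → Trace X Z
  | _, _, _, .nil _, U => U
  | _, _, _, .cons d θ s T, U => .cons d θ s (Trace.comp T U)

/-- Length of a trace. -/
def Trace.length : {X Y : Proc} → Trace X Y → ℕ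
  | _, _, .nil _ => 0
  | _, _, .cons _ _ _ T => Trace.length T + 1

/-- All transitions of a trace have direction `d`. -/
def Trace.AllDir (d : Bool) : {X Y : Proc} → Trace X Y → Prop
  | _, _, .nil _ => True
  | _, _, .cons d' _ _ T => d' = d ∧ Trace.AllDir d T

/-- Causal equivalence of traces: the least equivalence relation, closed under
composition, cancelling a transition followed by its reverse, and swapping the
two sides of a concurrency square. -/
inductive CEq : {X Y : Proc} → Trace X Y → Trace X Y → Prop
  | refl {X Y} (T : Trace X Y) : CEq T T
  | symm {X Y} {T T' : Trace X Y} : CEq T T' → CEq T' T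
  | trans {X Y} {T T' T'' : Trace X Y} : CEq T T' → CEq T' T'' → CEq T T''
  | congr {X Y Z : Proc} {d θ} (s : Step d X θ Y) {T T' : Trace Y Z} :
      CEq T T' → CEq (Trace.cons d θ s T) (Trace.cons d θ s T')
  | cancel {X Y Z : Proc} {d θ} (s : Step d X θ Y) (s' : Step (!d) Y θ X)
      (T : Trace X Z) :
      CEq (Trace.cons d θ s (Trace.cons (!d) θ s' T)) T
  | square {X X₁ X₂ Y Z : Proc} {d₁ d₂ θ₁ θ₂}
      (s₁ : Step d₁ X θ₁ X₁) (t₂ : Step d₂ X₁ θ₂ Y)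
      (s₂ : Step d₂ X θ₂ X₂) (t₁ : Step d₁ X₂ θ₁ Y)
      (hc : Conc θ₁ θ₂) (T : Trace Y Z) :
      CEq (Trace.cons d₁ θ₁ s₁ (Trace.cons d₂ θ₂ t₂ T))
          (Trace.cons d₂ θ₂ s₂ (Trace.cons d₁ θ₁ t₁ T))

/-- Removal of the keyed prefix α[k]. -/
def remP (a : Lab) (k : Key) : Proc → Proc
  | .nil => .nil
  | .pre b X => .pre b X
  | .kpre b m X => if b = a ∧ m = k then X else .kpre b m (remP a k X)
  | .par X Y => .par (remP a k X) (remP a k Y)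
  | .sum X Y => .sum (remP a k X) (remP a k Y)
  | .res X n => .res (remP a k X) n
  | .repl X => .repl (remP a k X)

/-- rem_k^α : remove α[k] and its complement (only α[k] when α = τ). -/
def remK (a : Lab) (k : Key) (X : Proc) : Proc :=
  if a = Lab.tau then remP a k X else remP a k (remP a.co k X)

/-- Left projection of enhanced keyed labels (partial). -/
def projL : ELab → Option ELab
  | .parL θ => some θ
  | .syn (.parL θL) _ => some θL
  | _ => none

/-- Right projection of enhanced keyed labels (partial). -/
def projR : ELab → Option ELab
  | .parR θ => some θ
  | .syn _ (.parR θR) => some θR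
  | _ => none

/-- Projection selector: `true` is left, `false` is right. -/
def eproj : Bool → ELab → Option ELab
  | true => projL
  | false => projR

/-- Component selector for parallel processes. -/
def side (b : Bool) (L R : Proc) : Proc := if b then L else R

/-- Labels of the shapes arising from a parallel composition. -/
def ParShape (θ : ELab) : Prop :=
  (∃ φ, θ = ELab.parL φ) ∨ (∃ φ, θ = ELab.parR φ) ∨
    ∃ φ ψ, θ = ELab.syn (ELab.parL φ) (ELab.parR ψ)

/-- The collapsing function σ identifying ! and |_R prefixes. -/
def collapse : ELab → ELab
  | .base a k => .base a k
  | .parL θ => .parL (collapse θ)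
  | .parR θ => .parR (collapse θ)
  | .bang θ => .parR (collapse θ)
  | .syn θ₁ θ₂ => .syn (collapse θ₁) (collapse θ₂)

/-- Sub-term relation: strips sums, restrictions and executed keyed prefixes.
`Strip X Y` means X is a sub-term of Y. -/
inductive Strip : Proc → Proc → Prop
  | refl (X : Proc) : Strip X X
  | sumL {X Y Z : Proc} : Strip X Y → Strip X (Y.sum Z)
  | sumR {X Y Z : Proc} : Strip X Y → Strip X (Z.sum Y)
  | res {X Y : Proc} {a : ℕ} : Strip X Y → Strip X (Y.res a)
  | kpre {X Y : Proc} {a : Lab} {k : Key} : Strip X Y → Strip X (.kpre a k Y)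

/-- A forward transition of the proved LTS, as an object. -/
structure FTrans where
  src : Proc
  lab : ELab
  tgt : Proc
  ok : Fwd src lab tgt

/-- A backward transition of the proved LTS, as an object. -/
structure BTrans where
  src : Proc
  lab : ELab
  tgt : Proc
  ok : Bwd src lab tgt

/-! By induction on the first transition, every forward move commutes with each later move whose
label is concurrent to its own. Labels of the proved LTS record the path of the derivation, so two
concurrent moves either go down into the same component, where the induction hypothesis applies,
or happen in different components of a parallel composition, where keys are fresh and the moves
can be exchanged. -/

namespace Fwd

variable {X X' : Proc} {θ : ELab}

theorem keys_eq (h : Fwd X θ X') : X'.keys = insert θ.key X.keys := by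
  induction h with
  | act => simp [Proc.keys, ELab.key]
  | pre _ _ ih => simp [Proc.keys, ih, Set.insert_comm]
  | res _ _ _ ih => simp [Proc.keys, ih]
  | parL _ _ ih => simp [Proc.keys, ELab.key, ih, Set.insert_union]
  | parR _ _ ih => simp [Proc.keys, ELab.key, ih, Set.union_insert]
  | syn _ _ _ _ hk ih₁ ih₂ =>
      simp [Proc.keys, ELab.key, ih₁, ih₂, hk, Set.insert_union, Set.union_insert]
  | sumL _ _ ih => simp [Proc.keys, ih, Set.insert_union]
  | sumR _ _ ih => simp [Proc.keys, ih, Set.union_insert]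

theorem key_not_mem (h : Fwd X θ X') : θ.key ∉ X.keys := by
  induction h with
  | act hs => simpa [Proc.keys] using (hs : _ = ∅) ▸ Set.notMem_empty _
  | pre _ hk ih => simpa [Proc.keys] using ⟨hk, ih⟩
  | res _ _ _ ih => simpa [Proc.keys] using ih
  | parL _ hk ih => simpa [Proc.keys, ELab.key] using ⟨ih, hk⟩
  | parR _ hk ih => simpa [Proc.keys, ELab.key] using ⟨hk, ih⟩
  | syn _ _ _ _ hk ih₁ ih₂ => simpa [Proc.keys, ELab.key] using ⟨ih₁, hk ▸ ih₂⟩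
  | sumL _ hs ih => simpa [Proc.keys, show _ = ∅ from hs] using ih
  | sumR _ hs ih => simpa [Proc.keys, show _ = ∅ from hs] using ih

theorem key_mem (h : Fwd X θ X') : θ.key ∈ X'.keys :=
  h.keys_eq ▸ Set.mem_insert _ _

theorem keys_subset (h : Fwd X θ X') : X.keys ⊆ X'.keys :=
  h.keys_eq ▸ Set.subset_insert _ _

theorem not_mem_keys {k : Key} (h : Fwd X θ X') (hk : k ∉ X.keys) (hne : k ≠ θ.key) :
    k ∉ X'.keys := by
  rw [h.keys_eq, Set.mem_insert_iff]
  tauto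

theorem not_std (h : Fwd X θ X') : ¬ X'.std := fun hs =>
  Set.notMem_empty _ ((hs : X'.keys = ∅) ▸ h.key_mem)

end Fwd

namespace Conc

variable {φ ψ φ₁ ψ₁ θL θR : ELab}

theorem symm (h : Conc φ ψ) : Conc ψ φ := And.symm h

theorem not_base {a : Lab} {k : Key} : ¬ Conc (.base a k) ψ := fun h => h.1 (.base a k ψ)

theorem of_parL (h : Conc (.parL φ) (.parL ψ)) : Conc φ ψ :=
  ⟨fun d => h.1 d.parL, fun d => h.2 d.parL⟩

theorem of_parR (h : Conc (.parR φ) (.parR ψ)) : Conc φ ψ :=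
  ⟨fun d => h.1 d.parR, fun d => h.2 d.parR⟩

theorem of_parL_syn (h : Conc (.parL φ) (.syn (.parL ψ) θR)) : Conc φ ψ :=
  ⟨fun d => h.1 d.parL.synTgtL, fun d => h.2 d.parL.synSrcL⟩

theorem of_parR_syn (h : Conc (.parR φ) (.syn θL (.parR ψ))) : Conc φ ψ :=
  ⟨fun d => h.1 d.parR.synTgtR, fun d => h.2 d.parR.synSrcR⟩

theorem of_syn_syn_left (h : Conc (.syn (.parL φ) θR) (.syn (.parL ψ) ψ₁)) : Conc φ ψ :=
  ⟨fun d => h.1 d.parL.synSynL, fun d => h.2 d.parL.synSynL⟩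

theorem of_syn_syn_right (h : Conc (.syn θL (.parR φ)) (.syn φ₁ (.parR ψ))) : Conc φ ψ :=
  ⟨fun d => h.1 d.parR.synSynR, fun d => h.2 d.parR.synSynR⟩

end Conc

def Commutes (X : Proc) (θ₁ : ELab) (X₁ : Proc) : Prop :=
  ∀ ⦃θ₂ Y⦄, Fwd X₁ θ₂ Y → Conc θ₁ θ₂ → ∃ X₂, Fwd X θ₂ X₂ ∧ Fwd X₂ θ₁ Y

namespace Commutes

variable {A A' B B' : Proc} {φ φ₁ φ₂ : ELab}

theorem act {a : Lab} {k : Key} : Commutes (.pre a A) (.base a k) (.kpre a k A) :=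
  fun _ _ _ hc => absurd hc Conc.not_base

theorem pre {a : Lab} {k : Key} (hk : φ.key ≠ k) (ih : Commutes A φ A') :
    Commutes (.kpre a k A) φ (.kpre a k A') := by
  rintro θ₂ Y (_ | ⟨h₂, hk₂⟩) hc
  obtain ⟨A₂, g₁, g₂⟩ := ih h₂ hc
  exact ⟨_, .pre g₁ hk₂, .pre g₂ hk⟩

theorem res {a : ℕ} (hn : φ.act ≠ .name a) (hcn : φ.act ≠ .coname a) (ih : Commutes A φ A') :
    Commutes (A.res a) φ (A'.res a) := by
  rintro θ₂ Y (_ | _ | ⟨h₂, hn₂, hcn₂⟩) hc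
  obtain ⟨A₂, g₁, g₂⟩ := ih h₂ hc
  exact ⟨_, .res g₁ hn₂ hcn₂, .res g₂ hn hcn⟩

/- The second move cannot take the other branch: it is no longer standard once the first
move has gone through it. -/
theorem sumL (h : Fwd A φ A') (hB : B.std) (ih : Commutes A φ A') :
    Commutes (A.sum B) φ (A'.sum B) := by
  rintro θ₂ Y (_ | _ | _ | _ | _ | _ | ⟨h₂, -⟩ | ⟨-, hA'⟩) hc
  · obtain ⟨A₂, g₁, g₂⟩ := ih h₂ hc
    exact ⟨_, .sumL g₁ hB, .sumL g₂ hB⟩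
  · exact absurd hA' h.not_std

theorem sumR (h : Fwd B φ B') (hA : A.std) (ih : Commutes B φ B') :
    Commutes (A.sum B) φ (A.sum B') := by
  rintro θ₂ Y (_ | _ | _ | _ | _ | _ | ⟨-, hB'⟩ | ⟨h₂, -⟩) hc
  · exact absurd hB' h.not_std
  · obtain ⟨B₂, g₁, g₂⟩ := ih h₂ hc
    exact ⟨_, .sumR g₁ hA, .sumR g₂ hA⟩

/- Moves in different components commute; their keys differ because the first key is already
present when the second move happens. -/
theorem par_swap (hA : Fwd A φ₁ A') (hB : Fwd B φ₂ B') (hkA : φ₂.key ∉ A'.keys)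
    (hkB : φ₁.key ∉ B.keys) : φ₁.key ∉ B'.keys ∧ φ₂.key ∉ A.keys :=
  ⟨hB.not_mem_keys hkB fun he => hkA (he ▸ hA.key_mem), fun hm => hkA (hA.keys_subset hm)⟩

theorem parL (h : Fwd A φ A') (hkB : φ.key ∉ B.keys) (ih : Commutes A φ A') :
    Commutes (A.par B) (.parL φ) (A'.par B) := by
  rintro θ₂ Y (_ | _ | _ | ⟨h₂, hk₂⟩ | ⟨h₂, hk₂⟩ | ⟨h₂, hB, hτ, hco, hkk⟩) hc
  · obtain ⟨A₂, g₁, g₂⟩ := ih h₂ hc.of_parL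
    exact ⟨_, .parL g₁ hk₂, .parL g₂ hkB⟩
  · obtain ⟨hk₁', hk₂'⟩ := par_swap h h₂ hk₂ hkB
    exact ⟨_, .parR h₂ hk₂', .parL h hk₁'⟩
  · obtain ⟨A₂, g₁, g₂⟩ := ih h₂ hc.of_parL_syn
    have hk₁' := hB.not_mem_keys hkB fun he =>
      h₂.key_not_mem (by rw [← hkk, ← he]; exact h.key_mem)
    exact ⟨_, .syn g₁ hB hτ hco hkk, .parL g₂ hk₁'⟩

theorem parR (h : Fwd B φ B') (hkA : φ.key ∉ A.keys) (ih : Commutes B φ B') :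
    Commutes (A.par B) (.parR φ) (A.par B') := by
  rintro θ₂ Y (_ | _ | _ | ⟨h₂, hk₂⟩ | ⟨h₂, hk₂⟩ | ⟨hA, h₂, hτ, hco, hkk⟩) hc
  · obtain ⟨hk₁', hk₂'⟩ := par_swap h h₂ hk₂ hkA
    exact ⟨_, .parL h₂ hk₂', .parR h hk₁'⟩
  · obtain ⟨B₂, g₁, g₂⟩ := ih h₂ hc.of_parR
    exact ⟨_, .parR g₁ hk₂, .parR g₂ hkA⟩
  · obtain ⟨B₂, g₁, g₂⟩ := ih h₂ hc.of_parR_syn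
    have hk₁' := hA.not_mem_keys hkA fun he =>
      h₂.key_not_mem (by rw [hkk, ← he]; exact h.key_mem)
    exact ⟨_, .syn hA g₁ hτ hco hkk, .parR g₂ hk₁'⟩

theorem syn (hA : Fwd A φ₁ A') (hB : Fwd B φ₂ B') (hτ : φ₁.act ≠ .tau)
    (hco : φ₂.act = φ₁.act.co) (hkk : φ₂.key = φ₁.key)
    (ihA : Commutes A φ₁ A') (ihB : Commutes B φ₂ B') :
    Commutes (A.par B) (.syn (.parL φ₁) (.parR φ₂)) (A'.par B') := by
  rintro θ₂ Y (_ | _ | _ | ⟨h₂, hk₂⟩ | ⟨h₂, hk₂⟩ | ⟨hA₂, hB₂, hτ₂, hco₂, hkk₂⟩) hc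
  · obtain ⟨A₂, g₁, g₂⟩ := ihA h₂ hc.symm.of_parL_syn.symm
    exact ⟨_, .parL g₁ fun hm => hk₂ (hB.keys_subset hm), .syn g₂ hB hτ hco hkk⟩
  · obtain ⟨B₂, g₁, g₂⟩ := ihB h₂ hc.symm.of_parR_syn.symm
    exact ⟨_, .parR g₁ fun hm => hk₂ (hA.keys_subset hm), .syn hA g₂ hτ hco hkk⟩
  · obtain ⟨A₂, gA₁, gA₂⟩ := ihA hA₂ hc.of_syn_syn_left
    obtain ⟨B₂, gB₁, gB₂⟩ := ihB hB₂ hc.of_syn_syn_right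
    exact ⟨_, .syn gA₁ gB₁ hτ₂ hco₂ hkk₂, .syn gA₂ gB₂ hτ hco hkk⟩

end Commutes

theorem Fwd.commutes {X X₁ : Proc} {θ : ELab} (h : Fwd X θ X₁) : Commutes X θ X₁ := by
  induction h with
  | act => exact .act
  | pre _ hk ih => exact .pre hk ih
  | res _ hn hcn ih => exact .res hn hcn ih
  | parL h hk ih => exact .parL h hk ih
  | parR h hk ih => exact .parR h hk ih
  | syn hA hB hτ hco hkk ihA ihB => exact .syn hA hB hτ hco hkk ihA ihB
  | sumL h hs ih => exact .sumL h hs ih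
  | sumR h hs ih => exact .sumR h hs ih

end CCSK

open CCSK in
/-- Forward diamond. -/
theorem forward_diamond : ∀ (X X₁ Y : Proc) (θ₁ θ₂ : ELab),
    Reachable X → Fwd X θ₁ X₁ → Fwd X₁ θ₂ Y → Conc θ₁ θ₂ →
    ∃ X₂ : Proc, Fwd X θ₂ X₂ ∧ Fwd X₂ θ₁ Y :=
  fun _ _ _ _ _ _ h₁ h₂ hc => h₁.commutes h₂ hc
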